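/- arXiv:1712.08027 — 3 statements merged into one kernel-verified Lean document; each statement's English description precedes it below -/
import Mathlib

section
/- For every x ∈ X, H({x}) > 0 if and only if liminf_{r→0} μ(B(x,r))/r > 0. -/
/-! Covering `{x}` by the single ball `B(x,r)` gives `H({x}) ≤ liminf_{r→0} μ(B(x,r))/r`.
Conversely, a ball `B(y,r)` of any cover of `{x}` contains `x`, so `B(x,r) ⊆ B(y,2r)` and by
doubling `μ(B(y,r))/r ≥ μ(B(x,r))/(C_d r)`; hence `liminf_{r→0} μ(B(x,r))/r ≤ C_d · H({x})`. -/

open MeasureTheory Metric Set Filter Topology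
open scoped ENNReal NNReal

noncomputable section

universe u

variable {X : Type u} [MetricSpace X] [MeasurableSpace X]

/-- The doubling condition: `0 < μ(B(x,2r)) ≤ C_d · μ(B(x,r)) < ∞` for every ball. -/
def IsDoubling (μ : Measure X) (Cd : ℝ≥0∞) : Prop :=
  ∀ (x : X) (r : ℝ), 0 < r →
    0 < μ (ball x (2 * r)) ∧ μ (ball x (2 * r)) ≤ Cd * μ (ball x r) ∧
      Cd * μ (ball x r) < ⊤

/-- The codimension-one restricted Hausdorff content `H_R(A)`. -/
def codimHContent (μ : Measure X) (R : ℝ) (A : Set X) : ℝ≥0∞ :=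
  ⨅ (c : ℕ → X × ℝ) (_ : A ⊆ ⋃ i, ball (c i).1 (c i).2) (_ : ∀ i, (c i).2 ≤ R),
    ∑' i, μ (ball (c i).1 (c i).2) / ENNReal.ofReal (c i).2

/-- The codimension-one Hausdorff measure `H(A) = lim_{R→0} H_R(A)`. -/
def codimH (μ : Measure X) (A : Set X) : ℝ≥0∞ :=
  ⨆ (R : ℝ) (_ : 0 < R), codimHContent μ R A

/-- The restricted maximal function `M_R ν(x) = sup_{0<r≤R} r·ν(B(x,r))/μ(B(x,r))`. -/
def maximalFn (μ ν : Measure X) (R : ℝ) (x : X) : ℝ≥0∞ :=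
  ⨆ (r : ℝ) (_ : 0 < r) (_ : r ≤ R),
    ENNReal.ofReal r * ν (ball x r) / μ (ball x r)

/-- `|s - t|` for extended-real numbers, interpreted as `∞` whenever at least one of
`s`, `t` is infinite. -/
def eAbsDiff (s t : EReal) : ℝ≥0∞ :=
  if s = ⊤ ∨ s = ⊥ ∨ t = ⊤ ∨ t = ⊥ then ⊤
  else ENNReal.ofReal |s.toReal - t.toReal|

/-- `g` is an upper gradient of `u` in `Ω`: `g` is a nonnegative Borel function, and for every
nonconstant rectifiable curve `γ` in `Ω` (represented through its 1-Lipschitz (arc-length-type)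
parametrizations on compact intervals) with endpoints `x,y` we have
`|u(x) - u(y)| ≤ ∫_γ g ds`. -/
def IsUpperGradientOn (g : X → ℝ≥0∞) (u : X → EReal) (Ω : Set X) : Prop :=
  Measurable g ∧
    ∀ (a b : ℝ), a ≤ b → ∀ γ : ℝ → X, LipschitzOnWith 1 γ (Set.Icc a b) →
      (∀ t ∈ Set.Icc a b, γ t ∈ Ω) →
      (∃ s ∈ Set.Icc a b, γ s ≠ γ a) →
      eAbsDiff (u (γ a)) (u (γ b)) ≤ ∫⁻ t in Set.Icc a b, g (γ t)

/-- The Newtonian `N^{1,1}` (extended) norm: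
`‖u‖_{N^{1,1}} = ‖u‖_{L¹} + inf ‖g‖_{L¹}` over upper gradients `g` of `u`. -/
def eN11 (μ : Measure X) (u : X → ℝ) : ℝ≥0∞ :=
  (∫⁻ x, ENNReal.ofReal |u x| ∂μ) +
    ⨅ (g : X → ℝ≥0∞) (_ : IsUpperGradientOn g (fun x => (u x : EReal)) Set.univ),
      ∫⁻ x, g x ∂μ

/-- The 1-capacity `capa₁(A) = inf ‖u‖_{N^{1,1}(X)}` over `u ∈ N^{1,1}(X)` with `u ≥ 1` on `A`. -/
def capa1 (μ : Measure X) (A : Set X) : ℝ≥0∞ :=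
  ⨅ (u : X → ℝ) (_ : ∀ x ∈ A, 1 ≤ u x), eN11 μ u

/-- The variational 1-capacity `rcapa₁(A,D) = inf ∫_X g_u dμ` over `u ∈ N^{1,1}(X)` with
`u ≥ 1` on `A` and `u = 0` on `X ∖ D`, and upper gradients `g_u` of `u`. -/
def rcapa1 (μ : Measure X) (A D : Set X) : ℝ≥0∞ :=
  ⨅ (u : X → ℝ) (_ : eN11 μ u < ⊤) (_ : ∀ x ∈ A, 1 ≤ u x)
    (_ : ∀ x, x ∉ D → u x = 0)
    (g : X → ℝ≥0∞) (_ : IsUpperGradientOn g (fun x => (u x : EReal)) Set.univ),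
    ∫⁻ x, g x ∂μ

/-- The `(1,1)`-Poincaré inequality:
`⨍_{B(x,r)} |u - u_{B(x,r)}| dμ ≤ C_P · r · ⨍_{B(x,λr)} g dμ`. -/
def PoincareIneq (μ : Measure X) (CP : ℝ≥0∞) (lam : ℝ) : Prop :=
  ∀ (x : X) (r : ℝ), 0 < r → ∀ (u : X → ℝ) (g : X → ℝ≥0∞),
    LocallyIntegrable u μ →
    IsUpperGradientOn g (fun y => (u y : EReal)) Set.univ →
    (∫⁻ y in ball x r, ENNReal.ofReal |u y - ⨍ z in ball x r, u z ∂μ| ∂μ) / μ (ball x r)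
      ≤ CP * ENNReal.ofReal r *
        ((∫⁻ y in ball x (lam * r), g y ∂μ) / μ (ball x (lam * r)))

/-- `A` is 1-thin at `x`:
`lim_{r→0} r · rcapa₁(A ∩ B(x,r), B(x,2r)) / μ(B(x,r)) = 0`. -/
def OneThin (μ : Measure X) (A : Set X) (x : X) : Prop :=
  Tendsto (fun r : ℝ =>
      ENNReal.ofReal r * rcapa1 μ (A ∩ ball x r) (ball x (2 * r)) / μ (ball x r))
    (𝓝[>] 0) (𝓝 0)

/-- The 1-base `b₁ A`: the set of points where `A` is 1-thick (not 1-thin). -/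
def OneBase (μ : Measure X) (A : Set X) : Set X := {x | ¬ OneThin μ A x}

/-- `U` is 1-finely open if `X ∖ U` is 1-thin at every point of `U`. -/
def OneFinelyOpen (μ : Measure X) (U : Set X) : Prop := ∀ x ∈ U, OneThin μ Uᶜ x

/-- `U` is 1-quasiopen if for every `ε > 0` there is an open `G` with `capa₁(G) < ε`
such that `U ∪ G` is open. -/
def OneQuasiopen (μ : Measure X) (U : Set X) : Prop :=
  ∀ ε : ℝ, 0 < ε → ∃ G : Set X, IsOpen G ∧ capa1 μ G < ENNReal.ofReal ε ∧ IsOpen (U ∪ G)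

/-- The 1-fine closure of `D`: the smallest 1-finely closed set containing `D`. -/
def OneFineClosure (μ : Measure X) (D : Set X) : Set X :=
  ⋂₀ {F : Set X | D ⊆ F ∧ OneFinelyOpen μ Fᶜ}

/-- `u` is Lipschitz in every open set compactly contained in `Ω`. -/
def LipschitzLocOn (u : X → ℝ) (Ω : Set X) : Prop :=
  ∀ Ω' : Set X, IsOpen Ω' → IsCompact (closure Ω') → closure Ω' ⊆ Ω →
    ∃ K : ℝ≥0, LipschitzOnWith K u Ω'

/-- `v i → u` in `L¹_loc(Ω)`. -/
def TendstoL1Loc (μ : Measure X) (Ω : Set X) (v : ℕ → X → ℝ) (u : X → ℝ) : Prop :=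
  ∀ K : Set X, K ⊆ Ω → IsCompact K →
    Tendsto (fun i => ∫⁻ x in K, ENNReal.ofReal |v i x - u x| ∂μ) atTop (𝓝 0)

/-- The total variation `‖Du‖(Ω)` of `u` in `Ω`. -/
def totalVar (μ : Measure X) (u : X → ℝ) (Ω : Set X) : ℝ≥0∞ :=
  ⨅ (v : ℕ → X → ℝ) (g : ℕ → X → ℝ≥0∞)
    (_ : ∀ i, LipschitzLocOn (v i) Ω)
    (_ : ∀ i, IsUpperGradientOn (g i) (fun x => (v i x : EReal)) Ω)
    (_ : TendstoL1Loc μ Ω v u),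
    liminf (fun i => ∫⁻ x in Ω, g i x ∂μ) atTop

/-- The (extended) BV norm `‖u‖_{BV(X)} = ‖u‖_{L¹(X)} + ‖Du‖(X)`. -/
def eBV (μ : Measure X) (u : X → ℝ) : ℝ≥0∞ :=
  (∫⁻ x, ENNReal.ofReal |u x| ∂μ) + totalVar μ u Set.univ

/-- `u ∈ BV(X)`: `u ∈ L¹(X)` and `‖Du‖(X) < ∞`. -/
def MemBV (μ : Measure X) (u : X → ℝ) : Prop := eBV μ u < ⊤

/-- The BV-capacity `capa_BV(A) = inf ‖u‖_{BV(X)}` over `u ∈ BV(X)` with `u ≥ 1`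
in a neighborhood of `A`. -/
def capaBV (μ : Measure X) (A : Set X) : ℝ≥0∞ :=
  ⨅ (u : X → ℝ) (_ : ∃ V : Set X, IsOpen V ∧ A ⊆ V ∧ ∀ x ∈ V, 1 ≤ u x), eBV μ u

/-- The lower approximate limit `u^∧(x)`. -/
def lowerApprox (μ : Measure X) (u : X → ℝ) (x : X) : EReal :=
  sSup ((fun s : ℝ => (s : EReal)) ''
    {s | Tendsto (fun r : ℝ => μ (ball x r ∩ {y | u y < s}) / μ (ball x r)) (𝓝[>] 0) (𝓝 0)})

/-- The support of a (μ-a.e. defined) function `u`. -/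
def suppOf (μ : Measure X) (u : X → ℝ) : Set X :=
  {x | ∀ r : ℝ, 0 < r → 0 < μ ({y | u y ≠ 0} ∩ ball x r)}

lemma codimHContent_le_of_subset_ball (μ : Measure X) {A : Set X} {y : X} {r R : ℝ}
    (hr : 0 ≤ r) (hrR : r ≤ R) (hA : A ⊆ ball y r) :
    codimHContent μ R A ≤ μ (ball y r) / ENNReal.ofReal r := by
  -- pad the one-ball cover with empty balls of radius `0`
  let c : ℕ → X × ℝ := fun i => (y, if i = 0 then r else 0)
  have hcov : A ⊆ ⋃ i, ball (c i).1 (c i).2 := hA.trans (subset_iUnion_of_subset 0 (by simp [c]))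
  have hrad : ∀ i, (c i).2 ≤ R := fun i => by
    simp only [c]; split_ifs <;> linarith
  refine (iInf₂_le_of_le c hcov (iInf_le_of_le hrad le_rfl)).trans_eq ?_
  rw [tsum_eq_single 0 fun i hi => by simp [c, hi]]
  simp [c]

lemma codimH_singleton_le_liminf (μ : Measure X) (x : X) :
    codimH μ {x} ≤ liminf (fun r : ℝ => μ (ball x r) / ENNReal.ofReal r) (𝓝[>] 0) :=
  iSup₂_le fun _ hR => le_liminf_of_le (by isBoundedDefault) <| by
    filter_upwards [Ioo_mem_nhdsGT hR] with r hr
    exact codimHContent_le_of_subset_ball μ hr.1.le hr.2.le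
      (singleton_subset_iff.2 (mem_ball_self hr.1))

namespace IsDoubling

variable {μ : Measure X} {Cd : ℝ≥0∞}

lemma ne_zero [Nonempty X] (h : IsDoubling μ Cd) : Cd ≠ 0 := by
  rintro rfl
  obtain ⟨x⟩ := ‹Nonempty X›
  obtain ⟨hpos, hle, -⟩ := h x 1 one_pos
  exact (hpos.trans_le hle).ne' (zero_mul _)

lemma ne_top [Nonempty X] (h : IsDoubling μ Cd) : Cd ≠ ⊤ := by
  obtain ⟨x⟩ := ‹Nonempty X›
  have hpos : 0 < μ (ball x 1) := by
    simpa [show (2 : ℝ) * (1 / 2) = 1 by norm_num] using (h x (1 / 2) (by norm_num)).1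
  exact (ENNReal.lt_top_of_mul_ne_top_left (h x 1 one_pos).2.2.ne hpos.ne').ne

lemma measure_ball_le_mul (h : IsDoubling μ Cd) {x y : X} {r : ℝ} (hxy : dist x y < r) :
    μ (ball x r) ≤ Cd * μ (ball y r) :=
  calc μ (ball x r) ≤ μ (ball y (2 * r)) := measure_mono (ball_subset_ball' (by linarith))
    _ ≤ Cd * μ (ball y r) := (h y r (dist_nonneg.trans_lt hxy)).2.1

lemma div_le_codimHContent_singleton (h : IsDoubling μ Cd) {x : X} {R : ℝ} {a : ℝ≥0∞}
    (ha : ∀ r, 0 < r → r ≤ R → a ≤ μ (ball x r) / ENNReal.ofReal r) :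
    a / Cd ≤ codimHContent μ R {x} := by
  refine le_iInf₂ fun c hcov => le_iInf fun hrad => ?_
  obtain ⟨i, hxi : dist x (c i).1 < (c i).2⟩ := mem_iUnion.1 (hcov (mem_singleton x))
  calc a / Cd ≤ μ (ball (c i).1 (c i).2) / ENNReal.ofReal (c i).2 := by
        refine ENNReal.div_le_of_le_mul' ?_
        calc a ≤ μ (ball x (c i).2) / ENNReal.ofReal (c i).2 :=
              ha _ (dist_nonneg.trans_lt hxi) (hrad i)
          _ ≤ Cd * μ (ball (c i).1 (c i).2) / ENNReal.ofReal (c i).2 := by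
              gcongr; exact h.measure_ball_le_mul hxi
          _ = Cd * (μ (ball (c i).1 (c i).2) / ENNReal.ofReal (c i).2) := mul_div_assoc _ _ _
    _ ≤ ∑' i, μ (ball (c i).1 (c i).2) / ENNReal.ofReal (c i).2 := ENNReal.le_tsum i

lemma liminf_le_mul_codimH_singleton (h : IsDoubling μ Cd) (x : X) :
    liminf (fun r : ℝ => μ (ball x r) / ENNReal.ofReal r) (𝓝[>] 0) ≤ Cd * codimH μ {x} := by
  have : Nonempty X := ⟨x⟩
  refine liminf_le_of_le (by isBoundedDefault) fun a ha => ?_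
  obtain ⟨ε, hε, hsub⟩ := mem_nhdsGT_iff_exists_Ioo_subset.1 ha
  have hcontent : a / Cd ≤ codimHContent μ (ε / 2) {x} :=
    h.div_le_codimHContent_singleton fun r hr hrε => hsub ⟨hr, by linarith⟩
  have hH : a / Cd ≤ codimH μ {x} := hcontent.trans (le_iSup₂_of_le (ε / 2) (half_pos hε) le_rfl)
  rwa [ENNReal.div_le_iff h.ne_zero h.ne_top, mul_comm] at hH

end IsDoubling

theorem codimH_singleton_pos_iff_general {X : Type u} [MetricSpace X]
    [MeasurableSpace X] (μ : Measure X)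
    (Cd : ℝ≥0∞) (hdoub : IsDoubling μ Cd) :
    ∀ x : X, 0 < codimH μ {x} ↔
      0 < liminf (fun r : ℝ => μ (ball x r) / ENNReal.ofReal r) (𝓝[>] 0) := by
  intro x
  refine ⟨fun h => h.trans_le (codimH_singleton_le_liminf μ x), fun h => ?_⟩
  refine pos_iff_ne_zero.2 fun h0 => h.ne' ?_
  simpa [h0] using hdoub.liminf_le_mul_codimH_singleton x

/-- `H({x}) > 0` iff `liminf_{r→0} μ(B(x,r))/r > 0`. -/
theorem codimH_singleton_pos_iff {X : Type u} [MetricSpace X] [CompleteSpace X] [Nontrivial X]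
    [MeasurableSpace X] [BorelSpace X] (μ : Measure X)
    (Cd : ℝ≥0∞) (hCd : 1 ≤ Cd) (hdoub : IsDoubling μ Cd) :
    ∀ x : X, 0 < codimH μ {x} ↔
      0 < liminf (fun r : ℝ => μ (ball x r) / ENNReal.ofReal r) (𝓝[>] 0) :=
  codimH_singleton_pos_iff_general μ Cd hdoub

end
end

section
/- The set {x ∈ X : H({x}) > 0} is a Borel set. -/
open MeasureTheory Metric Set Filter Topology
open scoped ENNReal NNReal

noncomputable section

universe u

variable {X : Type u} [MetricSpace X] [MeasurableSpace X]

/-!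
Covers in `codimHContent` are by open balls, so a cover of `{x}` also covers `{x'}` for all `x'`
near `x`: hence `x ↦ H_R({x})` is upper semicontinuous, in particular Borel. Since `H_R` is
antitone in `R`, `H({x})` is the supremum of the countably many `H_{1/(n+1)}({x})`.
-/

variable (μ : Measure X)

theorem codimHContent_antitone (A : Set X) : Antitone fun R => codimHContent μ R A :=
  fun _ _ hR => le_iInf fun c => le_iInf fun hcover => le_iInf fun hrad =>
    iInf_le_of_le c <| iInf_le_of_le hcover <| iInf_le _ fun i => (hrad i).trans hR

theorem codimH_eq_iSup_nat (A : Set X) :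
    codimH μ A = ⨆ n : ℕ, codimHContent μ (1 / (n + 1)) A := by
  refine le_antisymm (iSup₂_le fun R hR => ?_) (iSup_le fun n => ?_)
  · obtain ⟨n, hn⟩ := exists_nat_one_div_lt hR
    exact le_iSup_of_le n (codimHContent_antitone μ A hn.le)
  · exact le_iSup₂_of_le (1 / ((n : ℝ) + 1)) Nat.one_div_pos_of_nat le_rfl

theorem upperSemicontinuous_codimHContent_singleton (R : ℝ) :
    UpperSemicontinuous fun x => codimHContent μ R {x} := by
  intro x y hy
  simp only [codimHContent, iInf_lt_iff] at hy
  obtain ⟨c, hcover, hrad, hsum⟩ := hy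
  obtain ⟨i, hxi⟩ := mem_iUnion.mp (hcover rfl)
  filter_upwards [isOpen_ball.mem_nhds hxi] with x' hx'
  have hcover' : ({x'} : Set X) ⊆ ⋃ i, ball (c i).1 (c i).2 :=
    singleton_subset_iff.mpr (mem_iUnion_of_mem i hx')
  exact lt_of_le_of_lt (iInf₂_le_of_le c hcover' <| iInf_le _ hrad) hsum

theorem measurable_codimH_singleton [BorelSpace X] : Measurable fun x => codimH μ {x} := by
  simp_rw [codimH_eq_iSup_nat]
  exact Measurable.iSup fun n => (upperSemicontinuous_codimHContent_singleton μ _).measurable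

end

theorem measurableSet_codimH_singleton_pos_general {X : Type u} [MetricSpace X]
    [MeasurableSpace X] [BorelSpace X] (μ : Measure X) :
    MeasurableSet {x : X | 0 < codimH μ ({x} : Set X)} :=
  measurableSet_lt measurable_const (measurable_codimH_singleton μ)

/-- the set of points of positive codimension one Hausdorff measure
is Borel. -/
theorem measurableSet_codimH_singleton_pos {X : Type u} [MetricSpace X] [CompleteSpace X] [Nontrivial X]
    [MeasurableSpace X] [BorelSpace X] (μ : Measure X)
    (Cd : ℝ≥0∞) (hCd : 1 ≤ Cd) (hdoub : IsDoubling μ Cd) :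
    MeasurableSet {x : X | 0 < codimH μ ({x} : Set X)} :=
  measurableSet_codimH_singleton_pos_general μ
end

section
/- Let U ⊂ X be a 1-quasiopen set and let A ⊂ X satisfy H(A) = 0. Then U ∖ A and U ∪ A are 1-quasiopen sets. -/
open MeasureTheory Metric Set Filter Topology
open scoped ENNReal NNReal

noncomputable section

universe u

variable {X : Type u} [MetricSpace X] [MeasurableSpace X]

section Aux
variable {μ : Measure X} {Cd : ℝ≥0∞}

lemma eAbsDiff_coe (s t : ℝ) :
    eAbsDiff (s : ℝ) (t : ℝ) = ENNReal.ofReal |s - t| := by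
  rw [eAbsDiff, if_neg (by simp), EReal.toReal_coe, EReal.toReal_coe]

lemma IsDoubling.ball_pos (hdoub : IsDoubling μ Cd) (x : X) {r : ℝ} (hr : 0 < r) :
    0 < μ (ball x r) := by
  have := (hdoub x (r/2) (by linarith)).1
  rwa [show 2*(r/2) = r by ring] at this

lemma IsDoubling.closedBall_le (hdoub : IsDoubling μ Cd) (x : X) {s : ℝ} (hs : 0 < s) :
    μ (closedBall x (2*s)) ≤ Cd^2 * μ (ball x s) := by
  calc μ (closedBall x (2*s)) ≤ μ (ball x (2*(2*s))) :=
        measure_mono (closedBall_subset_ball (by linarith))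
    _ ≤ Cd * μ (ball x (2*s)) := (hdoub x (2*s) (by linarith)).2.1
    _ ≤ Cd * (Cd * μ (ball x s)) := mul_le_mul_right (hdoub x s hs).2.1 _
    _ = Cd^2 * μ (ball x s) := by ring

end Aux

namespace QS

def bump (x : X) (r : ℝ) (y : X) : ℝ := min 1 (max 0 (2 - dist y x / r))

lemma bump_nonneg (x : X) (r : ℝ) (y : X) : 0 ≤ bump x r y :=
  le_min zero_le_one (le_max_left _ _)

lemma bump_le_one (x : X) (r : ℝ) (y : X) : bump x r y ≤ 1 := min_le_left _ _

lemma bump_eq_one {x : X} {r : ℝ} (hr : 0 < r) {y : X} (hy : y ∈ ball x r) :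
    bump x r y = 1 := by
  have h := mem_ball.mp hy
  have h1 : dist y x / r < 1 := (div_lt_one hr).2 h
  have h2 : (1:ℝ) ≤ 2 - dist y x / r := by linarith
  rw [bump, max_eq_right (by linarith), min_eq_left h2]

lemma bump_continuous (x : X) (r : ℝ) : Continuous (bump x r) := by
  unfold bump
  fun_prop

lemma bump_eq_clamp {x : X} {r : ℝ} (hr : 0 < r) (y : X) :
    bump x r y = (2*r - min (2*r) (max r (dist y x)))/r := by
  have hr' : r ≠ 0 := ne_of_gt hr
  set s := dist y x with hs
  rcases le_total s r with h | h
  · have hs1 : s / r ≤ 1 := (div_le_one hr).2 h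
    rw [bump, ← hs, max_eq_right (by linarith), min_eq_left (by linarith),
      max_eq_left h, min_eq_right (by linarith : r ≤ 2*r),
      show (2*r - r) = r by ring, div_self hr']
  · rcases le_total s (2*r) with h2 | h2
    · have hs1 : (1:ℝ) ≤ s / r := (one_le_div hr).2 h
      have hs2 : s / r ≤ 2 := by rw [div_le_iff₀ hr]; linarith
      rw [bump, ← hs, max_eq_right h, min_eq_right h2,
        max_eq_right (by linarith), min_eq_right (by linarith)]
      field_simp
    · have hs2 : (2:ℝ) ≤ s / r := by rw [le_div_iff₀ hr]; linarith
      rw [bump, ← hs, max_eq_right h, min_eq_left h2,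
        max_eq_left (by linarith), sub_self, zero_div,
        min_eq_right (zero_le_one)]

lemma clamp_mono {r : ℝ} {s t : ℝ} (h : s ≤ t) :
    min (2*r) (max r s) ≤ min (2*r) (max r t) :=
  min_le_min le_rfl (max_le_max le_rfl h)

lemma bump_curve [MeasurableSpace X] [BorelSpace X] {x : X} {r : ℝ} (hr : 0 < r)
    {a b : ℝ} (hab : a ≤ b) {γ : ℝ → X} (hγ : LipschitzOnWith 1 γ (Icc a b)) :
    ENNReal.ofReal |bump x r (γ a) - bump x r (γ b)| ≤
      ∫⁻ t in Icc a b, (closedBall x (2*r)).indicator (fun _ => (ENNReal.ofReal r)⁻¹) (γ t) := by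
  have hr' : r ≠ 0 := ne_of_gt hr
  set d : ℝ → ℝ := fun t => dist (γ t) x with hd
  have hdlip : LipschitzOnWith 1 d (Icc a b) := by
    have h := (LipschitzWith.dist_left x).comp_lipschitzOnWith hγ; rw [mul_one] at h; exact h
  have hdcont : ContinuousOn d (Icc a b) := hdlip.continuousOn
  set α := min (2*r) (max r (min (d a) (d b))) with hα
  set β := min (2*r) (max r (max (d a) (d b))) with hβ
  have h1 : |bump x r (γ a) - bump x r (γ b)| = (β - α)/r := by
    rw [bump_eq_clamp hr, bump_eq_clamp hr]
    rcases le_total (d a) (d b) with h | h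
    · rw [hα, hβ, min_eq_left h, max_eq_right h]
      rw [div_sub_div_same]
      have hm := clamp_mono (r := r) h
      rw [show 2*r - min (2*r) (max r (d a)) - (2*r - min (2*r) (max r (d b)))
        = min (2*r) (max r (d b)) - min (2*r) (max r (d a)) by ring]
      rw [abs_div, abs_of_pos hr, abs_of_nonneg (by linarith)]
    · rw [hα, hβ, min_eq_right h, max_eq_left h]
      rw [div_sub_div_same]
      have hm := clamp_mono (r := r) h
      rw [show 2*r - min (2*r) (max r (d a)) - (2*r - min (2*r) (max r (d b)))
        = min (2*r) (max r (d b)) - min (2*r) (max r (d a)) by ring]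
      rw [abs_div, abs_of_pos hr, abs_of_nonpos (by linarith), neg_sub]
  rw [h1]
  rcases le_or_gt β α with hba | hab2
  · have : (β - α)/r ≤ 0 := div_nonpos_iff.mpr (Or.inr ⟨by linarith, hr.le⟩)
    rw [ENNReal.ofReal_eq_zero.2 this]
    exact zero_le
  · -- α < β : nontrivial case
    have hrα : r ≤ α := le_min (by linarith) (le_max_left _ _)
    have hβ2r : β ≤ 2*r := min_le_left _ _
    have hαle : min (d a) (d b) ≤ α := by
      rcases le_total (min (d a) (d b)) (2*r) with hm | hm
      · exact le_min hm (le_max_right _ _)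
      · exfalso
        have hα' : α = 2*r := by
          rw [hα, max_eq_right (le_trans (by linarith) hm), min_eq_left hm]
        have hβ' : β = 2*r := by
          have hm2 : 2*r ≤ max (d a) (d b) := hm.trans (min_le_max)
          rw [hβ, max_eq_right (le_trans (by linarith) hm2), min_eq_left hm2]
        rw [hα', hβ'] at hab2
        exact lt_irrefl _ hab2
    have hβle : β ≤ max (d a) (d b) := by
      have h3 : r < max r (max (d a) (d b)) := lt_of_lt_of_le (lt_of_le_of_lt hrα hab2) (min_le_right _ _)
      have h4 : r ≤ max (d a) (d b) := by
        by_contra hc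
        push_neg at hc
        rw [max_eq_left hc.le] at h3
        exact lt_irrefl _ h3
      calc β ≤ max r (max (d a) (d b)) := min_le_right _ _
        _ = max (d a) (d b) := max_eq_right h4
    set E := Icc a b ∩ d ⁻¹' (Iic (2*r)) with hE
    have hsubE : Icc α β ⊆ d '' E := by
      intro s hs
      have hs' : s ∈ d '' (Icc a b) := by
        rcases le_total (d a) (d b) with h | h
        · exact intermediate_value_Icc hab hdcont
            ⟨le_trans (by simpa [min_eq_left h] using hαle) hs.1,
             le_trans hs.2 (by simpa [max_eq_right h] using hβle)⟩
        · exact intermediate_value_Icc' hab hdcont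
            ⟨le_trans (by simpa [min_eq_right h] using hαle) hs.1,
             le_trans hs.2 (by simpa [max_eq_left h] using hβle)⟩
      obtain ⟨t, ht, hts⟩ := hs'
      exact ⟨t, ⟨ht, by simp only [mem_preimage, mem_Iic, hts]; exact hs.2.trans hβ2r⟩, hts⟩
    have hEclosed : IsClosed E :=
      hdcont.preimage_isClosed_of_isClosed isClosed_Icc isClosed_Iic
    have hEvol : ENNReal.ofReal (β - α) ≤ volume E := by
      calc ENNReal.ofReal (β - α) = volume (Icc α β) := (Real.volume_Icc).symm
        _ ≤ volume (d '' E) := measure_mono hsubE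
        _ = μH[1] (d '' E) := by rw [MeasureTheory.hausdorffMeasure_real]
        _ ≤ (1:ℝ≥0) ^ (1:ℝ) * μH[1] E :=
            (hdlip.mono inter_subset_left).hausdorffMeasure_image_le zero_le_one
        _ = volume E := by rw [MeasureTheory.hausdorffMeasure_real]; simp
    have hmeasE : MeasurableSet E := hEclosed.measurableSet
    calc ENNReal.ofReal ((β - α)/r)
        = (ENNReal.ofReal r)⁻¹ * ENNReal.ofReal (β - α) := by
          rw [ENNReal.ofReal_div_of_pos hr, div_eq_mul_inv, mul_comm]
      _ ≤ (ENNReal.ofReal r)⁻¹ * volume E := mul_le_mul_right hEvol _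
      _ = ∫⁻ _ in E, (ENNReal.ofReal r)⁻¹ := (setLIntegral_const _ _).symm
      _ = ∫⁻ t in E, (closedBall x (2*r)).indicator (fun _ => (ENNReal.ofReal r)⁻¹) (γ t) := by
          refine setLIntegral_congr_fun hmeasE ?_
          intro t ht
          have : γ t ∈ closedBall x (2*r) := by
            simpa [mem_closedBall] using ht.2
          simp only [indicator_of_mem this]
      _ ≤ ∫⁻ t in Icc a b, (closedBall x (2*r)).indicator (fun _ => (ENNReal.ofReal r)⁻¹) (γ t) :=
          lintegral_mono_set inter_subset_left

lemma abs_min1 (s t : ℝ) : |min 1 s - min 1 t| ≤ |s - t| := by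
  have := abs_min_sub_min_le_max (1:ℝ) s 1 t
  simpa using this

lemma abs_max0 (s t : ℝ) : |max 0 s - max 0 t| ≤ |s - t| := by
  have := abs_max_sub_max_le_max (0:ℝ) s 0 t
  simpa using this

lemma eAbsDiff_coe (s t : ℝ) :
    (if ((s:EReal) = ⊤ ∨ (s:EReal) = ⊥ ∨ (t:EReal) = ⊤ ∨ (t:EReal) = ⊥) then (⊤:ℝ≥0∞)
      else ENNReal.ofReal |(s:EReal).toReal - (t:EReal).toReal|) = ENNReal.ofReal |s - t| := by
  rw [if_neg (by simp), EReal.toReal_coe, EReal.toReal_coe]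

/-- Clamp inequality in `ℝ≥0∞`. -/
lemma min_add_one_le (a c : ℝ≥0∞) : min (a + c) 1 ≤ min a 1 + c := by
  rcases le_total a 1 with h | h
  · exact le_trans (min_le_left _ _) (by rw [min_eq_left h])
  · rw [min_eq_right h]
    exact le_trans (min_le_right _ _) (by simp)

/-- `|T p - T q| ≤ ∑ |p i - q i|` where `T` is the truncated `tsum`. -/
lemma ofReal_abs_min_tsum_le {p q : ℕ → ℝ} (hp : ∀ i, 0 ≤ p i) (hq : ∀ i, 0 ≤ q i) :
    ENNReal.ofReal |(min (∑' i, ENNReal.ofReal (p i)) 1).toReal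
        - (min (∑' i, ENNReal.ofReal (q i)) 1).toReal|
      ≤ ∑' i, ENNReal.ofReal |p i - q i| := by
  set D := ∑' i, ENNReal.ofReal |p i - q i| with hD
  rcases eq_or_ne D ⊤ with hDt | hDt
  · rw [hDt]; exact le_top
  set Sp := ∑' i, ENNReal.ofReal (p i) with hSp
  set Sq := ∑' i, ENNReal.ofReal (q i) with hSq
  have key : ∀ (u v : ℕ → ℝ), (∀ i, 0 ≤ u i) → (∀ i, 0 ≤ v i) →
      (∑' i, ENNReal.ofReal (u i)) ≤ (∑' i, ENNReal.ofReal (v i)) + ∑' i, ENNReal.ofReal |u i - v i| := by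
    intro u v hu hv
    rw [← ENNReal.tsum_add]
    refine ENNReal.tsum_le_tsum fun i => ?_
    rw [← ENNReal.ofReal_add (hv i) (abs_nonneg _)]
    exact ENNReal.ofReal_le_ofReal (by
      have := abs_sub_abs_le_abs_sub (u i) (v i)
      have h2 := le_abs_self (u i - v i)
      linarith)
  have habs : ∀ (u v : ℕ → ℝ), |u 0 - v 0| = |v 0 - u 0| := fun u v => abs_sub_comm _ _
  have hDq : ∑' i, ENNReal.ofReal |q i - p i| = D := by
    rw [hD]; congr 1; ext i; rw [abs_sub_comm]
  have h1 : min Sp 1 ≤ min Sq 1 + D := le_trans (min_le_min_right 1 (key p q hp hq)) (min_add_one_le _ _)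
  have h2 : min Sq 1 ≤ min Sp 1 + D := by
    have := le_trans (min_le_min_right 1 (key q p hq hp)) (min_add_one_le Sp _)
    rwa [hDq] at this
  have hfp : min Sp 1 ≠ ⊤ := ne_top_of_le_ne_top ENNReal.one_ne_top (min_le_right _ _)
  have hfq : min Sq 1 ≠ ⊤ := ne_top_of_le_ne_top ENNReal.one_ne_top (min_le_right _ _)
  have t1 : (min Sp 1).toReal ≤ (min Sq 1).toReal + D.toReal := by
    have := ENNReal.toReal_mono (by simp [ENNReal.add_ne_top, hfq, hDt]) h1
    rwa [ENNReal.toReal_add hfq hDt] at this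
  have t2 : (min Sq 1).toReal ≤ (min Sp 1).toReal + D.toReal := by
    have := ENNReal.toReal_mono (by simp [ENNReal.add_ne_top, hfp, hDt]) h2
    rwa [ENNReal.toReal_add hfp hDt] at this
  calc ENNReal.ofReal |(min Sp 1).toReal - (min Sq 1).toReal|
      ≤ ENNReal.ofReal D.toReal := ENNReal.ofReal_le_ofReal (abs_le.2 ⟨by linarith, by linarith⟩)
    _ = D := ENNReal.ofReal_toReal hDt


lemma bump_eq_zero {x : X} {r : ℝ} (hr : 0 < r) {y : X} (hy : 2*r ≤ dist y x) :
    bump x r y = 0 := by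
  have h1 : (2:ℝ) ≤ dist y x / r := by rw [le_div_iff₀ hr]; linarith
  rw [bump, max_eq_left (by linarith), min_eq_right (le_refl 0 |>.trans zero_le_one)]

lemma ofReal_bump_le_indicator [MeasurableSpace X] {x : X} {r : ℝ} (hr : 0 < r) (y : X) :
    ENNReal.ofReal (bump x r y) ≤ (closedBall x (2*r)).indicator (fun _ => (1:ℝ≥0∞)) y := by
  by_cases hy : y ∈ closedBall x (2*r)
  · rw [indicator_of_mem hy]
    exact ENNReal.ofReal_le_one.2 (bump_le_one _ _ _)
  · rw [indicator_of_notMem hy]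
    rw [mem_closedBall, not_le] at hy
    rw [bump_eq_zero hr hy.le]
    simp

end QS


/-- stability of 1-quasiopen sets under H-negligible perturbations. -/
theorem quasiopen_stability {X : Type u} [MetricSpace X] [CompleteSpace X] [Nontrivial X]
    [MeasurableSpace X] [BorelSpace X] (μ : Measure X)
    (Cd : ℝ≥0∞) (hCd : 1 ≤ Cd) (hdoub : IsDoubling μ Cd)
    (CP : ℝ≥0∞) (hCP : 0 < CP) (lam : ℝ) (hlam : 1 ≤ lam) (hPI : PoincareIneq μ CP lam) (U A : Set X) (hU : OneQuasiopen μ U) (hA : codimH μ A = 0) :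
    OneQuasiopen μ (U \ A) ∧ OneQuasiopen μ (U ∪ A) := by
  classical
  obtain ⟨x₀⟩ : Nonempty X := inferInstance
  have hb1 : 0 < μ (ball x₀ 1) := hdoub.ball_pos x₀ one_pos
  have hCdne : Cd ≠ ⊤ := by
    intro h
    have h2 := (hdoub x₀ 1 one_pos).2.2
    rw [h, ENNReal.top_mul hb1.ne'] at h2
    exact absurd h2 (lt_irrefl _)
  have key : ∀ ε : ℝ, 0 < ε → ∃ G' : Set X, IsOpen G' ∧ capa1 μ G' < ENNReal.ofReal ε ∧
      A ⊆ G' ∧ IsOpen (U ∪ G') := by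
    intro ε hε
    obtain ⟨G, hGopen, hGcap, hUG⟩ := hU (ε/2) (by linarith)
    -- extract a test function u and upper gradient g for G
    rw [capa1, iInf_lt_iff] at hGcap
    obtain ⟨u, hGcap⟩ := hGcap
    rw [iInf_lt_iff] at hGcap
    obtain ⟨hu1, huN⟩ := hGcap
    rw [eN11] at huN
    set L := ∫⁻ x, ENNReal.ofReal |u x| ∂μ with hL
    have hLle : L ≤ ENNReal.ofReal (ε/2) := le_of_lt (lt_of_le_of_lt le_self_add huN)
    have hLne : L ≠ ⊤ := ne_top_of_le_ne_top ENNReal.ofReal_ne_top hLle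
    have hIlt : (⨅ (g : X → ℝ≥0∞)
        (_ : IsUpperGradientOn g (fun x => ((u x : ℝ) : EReal)) Set.univ), ∫⁻ x, g x ∂μ)
        < ENNReal.ofReal (ε/2) - L := by
      rw [lt_tsub_iff_left]
      exact huN
    rw [iInf_lt_iff] at hIlt
    obtain ⟨g, hIlt⟩ := hIlt
    rw [iInf_lt_iff] at hIlt
    obtain ⟨hg, hgint⟩ := hIlt
    have hLg : L + ∫⁻ x, g x ∂μ < ENNReal.ofReal (ε/2) := by
      calc L + ∫⁻ x, g x ∂μ < L + (ENNReal.ofReal (ε/2) - L) :=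
            ENNReal.add_lt_add_left hLne hgint
        _ = ENNReal.ofReal (ε/2) := add_tsub_cancel_of_le hLle
    -- extract a cover of A
    set δ := ENNReal.ofReal (ε/2) / (2 * Cd^2) with hδ
    have hδpos : 0 < δ := ENNReal.div_pos (by simp only [ne_eq, ENNReal.ofReal_eq_zero, not_le]; linarith)
      (ENNReal.mul_ne_top (by simp) (ENNReal.pow_ne_top hCdne))
    have hcont : codimHContent μ 1 A = 0 := by
      refine le_antisymm ?_ zero_le
      rw [← hA, codimH]
      exact le_iSup_of_le 1 (le_iSup_of_le one_pos le_rfl)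
    have hclt : codimHContent μ 1 A < δ := by rw [hcont]; exact hδpos
    rw [codimHContent, iInf_lt_iff] at hclt
    obtain ⟨c, hclt⟩ := hclt
    rw [iInf_lt_iff] at hclt
    obtain ⟨hc1, hclt⟩ := hclt
    rw [iInf_lt_iff] at hclt
    obtain ⟨hc2, hc3⟩ := hclt
    -- constructions
    set v : ℕ → X → ℝ := fun i => if 0 < (c i).2 then QS.bump (c i).1 (c i).2 else fun _ => 0
      with hv
    set Gr : ℕ → X → ℝ≥0∞ := fun i => if 0 < (c i).2 then
        (closedBall (c i).1 (2*(c i).2)).indicator (fun _ => (ENNReal.ofReal (c i).2)⁻¹)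
      else fun _ => 0 with hGr
    have hvnn : ∀ i y, 0 ≤ v i y := by
      intro i y
      simp only [hv]
      split_ifs
      · exact QS.bump_nonneg _ _ _
      · exact le_rfl
    have hvmeas : ∀ i, Measurable (fun y => ENNReal.ofReal (v i y)) := by
      intro i
      simp only [hv]
      split_ifs
      · exact (QS.bump_continuous _ _).measurable.ennreal_ofReal
      · exact measurable_const
    have hGrmeas : ∀ i, Measurable (Gr i) := by
      intro i
      simp only [hGr]
      split_ifs
      · exact measurable_const.indicator measurableSet_closedBall
      · exact measurable_const
    set S : X → ℝ≥0∞ := fun y => ∑' i, ENNReal.ofReal (v i y) with hS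
    have hSmeas : Measurable S := Measurable.ennreal_tsum hvmeas
    set T : X → ℝ := fun y => (min (S y) 1).toReal with hT
    set u' : X → ℝ := fun y => max 0 (u y) with hu'
    set F : X → ℝ := fun y => min 1 (u' y + T y) with hF
    set gF : X → ℝ≥0∞ := fun y => g y + ∑' i, Gr i y with hgF
    have hT0 : ∀ y, 0 ≤ T y := fun y => ENNReal.toReal_nonneg
    have hu'0 : ∀ y, 0 ≤ u' y := fun y => le_max_left _ _
    -- F ≥ 1 on G ∪ ⋃ balls
    have hF1 : ∀ y ∈ G ∪ ⋃ i, ball (c i).1 (c i).2, (1:ℝ) ≤ F y := by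
      intro y hy
      rcases hy with hyG | hyB
      · have h1 : 1 ≤ u' y := le_trans (hu1 y hyG) (le_max_right _ _)
        exact le_min le_rfl (by linarith [hT0 y])
      · obtain ⟨i, hi⟩ := mem_iUnion.mp hyB
        have hri : 0 < (c i).2 := lt_of_le_of_lt dist_nonneg (mem_ball.mp hi)
        have hvi : v i y = 1 := by
          simp only [hv]
          simp only [if_pos hri]
          exact QS.bump_eq_one hri hi
        have hS1 : 1 ≤ S y := by
          calc (1:ℝ≥0∞) = ENNReal.ofReal (v i y) := by rw [hvi]; simp
            _ ≤ S y := ENNReal.le_tsum i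
        have hT1 : T y = 1 := by rw [hT]; simp only [min_eq_right hS1]; simp
        rw [hF]
        simp only [hT1]
        exact le_min le_rfl (by linarith [hu'0 y])
    -- gF is an upper gradient of F
    have hgFgrad : IsUpperGradientOn gF (fun y => ((F y : ℝ) : EReal)) Set.univ := by
      constructor
      · exact hg.1.add (Measurable.ennreal_tsum hGrmeas)
      · intro a b hab γ hγ hγΩ hnc
        have hγm : AEMeasurable γ (volume.restrict (Set.Icc a b)) :=
          hγ.continuousOn.aemeasurable measurableSet_Icc
        have hstep1 : |F (γ a) - F (γ b)| ≤ |u (γ a) - u (γ b)| + |T (γ a) - T (γ b)| := by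
          calc |F (γ a) - F (γ b)|
              ≤ |(u' (γ a) + T (γ a)) - (u' (γ b) + T (γ b))| := QS.abs_min1 _ _
            _ = |(u' (γ a) - u' (γ b)) + (T (γ a) - T (γ b))| := by ring_nf
            _ ≤ |u' (γ a) - u' (γ b)| + |T (γ a) - T (γ b)| := abs_add_le _ _
            _ ≤ |u (γ a) - u (γ b)| + |T (γ a) - T (γ b)| :=
                add_le_add_left (QS.abs_max0 _ _) _
        have hTd : ENNReal.ofReal |T (γ a) - T (γ b)|
            ≤ ∑' i, ENNReal.ofReal |v i (γ a) - v i (γ b)| :=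
          QS.ofReal_abs_min_tsum_le (fun i => hvnn i (γ a)) (fun i => hvnn i (γ b))
        have hud : ENNReal.ofReal |u (γ a) - u (γ b)| ≤ ∫⁻ t in Set.Icc a b, g (γ t) := by
          have h := hg.2 a b hab γ hγ (fun t _ => mem_univ _) hnc
          rwa [eAbsDiff_coe] at h
        have hvd : ∀ i, ENNReal.ofReal |v i (γ a) - v i (γ b)|
            ≤ ∫⁻ t in Set.Icc a b, Gr i (γ t) := by
          intro i
          simp only [hv, hGr]
          by_cases hri : 0 < (c i).2
          · simp only [if_pos hri]
            exact QS.bump_curve hri hab hγ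
          · simp only [if_neg hri]
            simp
        rw [eAbsDiff_coe]
        calc ENNReal.ofReal |F (γ a) - F (γ b)|
            ≤ ENNReal.ofReal (|u (γ a) - u (γ b)| + |T (γ a) - T (γ b)|) :=
              ENNReal.ofReal_le_ofReal hstep1
          _ = ENNReal.ofReal |u (γ a) - u (γ b)| + ENNReal.ofReal |T (γ a) - T (γ b)| :=
              ENNReal.ofReal_add (abs_nonneg _) (abs_nonneg _)
          _ ≤ (∫⁻ t in Set.Icc a b, g (γ t)) + ∑' i, ∫⁻ t in Set.Icc a b, Gr i (γ t) :=
              add_le_add hud (le_trans hTd (ENNReal.tsum_le_tsum hvd))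
          _ = (∫⁻ t in Set.Icc a b, g (γ t)) + ∫⁻ t in Set.Icc a b, ∑' i, Gr i (γ t) := by
              rw [lintegral_tsum (f := fun i t => Gr i (γ t))
                (fun i => (hGrmeas i).comp_aemeasurable hγm)]
          _ = ∫⁻ t in Set.Icc a b, gF (γ t) :=
              (lintegral_add_right' _
                (((Measurable.ennreal_tsum hGrmeas).comp_aemeasurable hγm :
                  AEMeasurable (fun t => ∑' i, Gr i (γ t)) _))).symm
    -- integral bounds for the pieces
    set Sig := ∑' i, μ (ball (c i).1 (c i).2) / ENNReal.ofReal (c i).2 with hSig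
    have hterm : ∀ i, 0 < (c i).2 →
        μ (ball (c i).1 (c i).2) ≤ μ (ball (c i).1 (c i).2) / ENNReal.ofReal (c i).2 := by
      intro i hri
      have h1 : ENNReal.ofReal (c i).2 ≤ 1 := by
        rw [show (1:ℝ≥0∞) = ENNReal.ofReal 1 by simp]
        exact ENNReal.ofReal_le_ofReal (hc2 i)
      calc μ (ball (c i).1 (c i).2) = μ (ball (c i).1 (c i).2) * 1 := (mul_one _).symm
        _ ≤ μ (ball (c i).1 (c i).2) * (ENNReal.ofReal (c i).2)⁻¹ :=
            mul_le_mul_right (ENNReal.one_le_inv.2 h1) _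
        _ = μ (ball (c i).1 (c i).2) / ENNReal.ofReal (c i).2 := (div_eq_mul_inv _ _).symm
    have hint_v : ∀ i, ∫⁻ y, ENNReal.ofReal (v i y) ∂μ
        ≤ Cd^2 * (μ (ball (c i).1 (c i).2) / ENNReal.ofReal (c i).2) := by
      intro i
      simp only [hv]
      by_cases hri : 0 < (c i).2
      · simp only [if_pos hri]
        calc ∫⁻ y, ENNReal.ofReal (QS.bump (c i).1 (c i).2 y) ∂μ
            ≤ ∫⁻ y, (closedBall (c i).1 (2*(c i).2)).indicator (fun _ => (1:ℝ≥0∞)) y ∂μ :=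
              lintegral_mono (fun y => QS.ofReal_bump_le_indicator hri y)
          _ = μ (closedBall (c i).1 (2*(c i).2)) := by
              rw [lintegral_indicator measurableSet_closedBall]
              simp
          _ ≤ Cd^2 * μ (ball (c i).1 (c i).2) := hdoub.closedBall_le _ hri
          _ ≤ Cd^2 * (μ (ball (c i).1 (c i).2) / ENNReal.ofReal (c i).2) :=
              mul_le_mul_right (hterm i hri) _
      · simp only [if_neg hri]
        simp
    have hint_G : ∀ i, ∫⁻ y, Gr i y ∂μ
        ≤ Cd^2 * (μ (ball (c i).1 (c i).2) / ENNReal.ofReal (c i).2) := by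
      intro i
      simp only [hGr]
      by_cases hri : 0 < (c i).2
      · simp only [if_pos hri]
        rw [lintegral_indicator measurableSet_closedBall, setLIntegral_const]
        calc (ENNReal.ofReal (c i).2)⁻¹ * μ (closedBall (c i).1 (2*(c i).2))
            ≤ (ENNReal.ofReal (c i).2)⁻¹ * (Cd^2 * μ (ball (c i).1 (c i).2)) :=
              mul_le_mul_right (hdoub.closedBall_le _ hri) _
          _ = Cd^2 * (μ (ball (c i).1 (c i).2) * (ENNReal.ofReal (c i).2)⁻¹) := by ring
          _ = Cd^2 * (μ (ball (c i).1 (c i).2) / ENNReal.ofReal (c i).2) := by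
              rw [div_eq_mul_inv]
      · simp only [if_neg hri]
        simp
    -- L¹ bound for F
    have hFL1 : ∫⁻ y, ENNReal.ofReal |F y| ∂μ ≤ L + Cd^2 * Sig := by
      have hpt : ∀ y, ENNReal.ofReal |F y| ≤ ENNReal.ofReal |u y| + S y := by
        intro y
        have hF0 : 0 ≤ F y := le_min zero_le_one (add_nonneg (hu'0 y) (hT0 y))
        have h1 : F y ≤ |u y| + T y :=
          le_trans (min_le_right _ _)
            (add_le_add_left (max_le (abs_nonneg _) (le_abs_self _)) _)
        calc ENNReal.ofReal |F y| = ENNReal.ofReal (F y) := by rw [abs_of_nonneg hF0]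
          _ ≤ ENNReal.ofReal (|u y| + T y) := ENNReal.ofReal_le_ofReal h1
          _ = ENNReal.ofReal |u y| + ENNReal.ofReal (T y) :=
              ENNReal.ofReal_add (abs_nonneg _) (hT0 y)
          _ ≤ ENNReal.ofReal |u y| + S y := by
              refine add_le_add_right ?_ _
              rw [hT, ENNReal.ofReal_toReal (ne_top_of_le_ne_top ENNReal.one_ne_top
                (min_le_right _ _))]
              exact min_le_left _ _
      calc ∫⁻ y, ENNReal.ofReal |F y| ∂μ ≤ ∫⁻ y, (ENNReal.ofReal |u y| + S y) ∂μ :=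
            lintegral_mono hpt
        _ = L + ∫⁻ y, S y ∂μ := lintegral_add_right _ hSmeas
        _ = L + ∑' i, ∫⁻ y, ENNReal.ofReal (v i y) ∂μ := by
            rw [hS, lintegral_tsum (fun i => (hvmeas i).aemeasurable)]
        _ ≤ L + Cd^2 * Sig := by
            refine add_le_add_right ?_ _
            rw [hSig, ← ENNReal.tsum_mul_left]
            exact ENNReal.tsum_le_tsum hint_v
    -- gradient integral bound
    have hgFint : ∫⁻ y, gF y ∂μ ≤ (∫⁻ y, g y ∂μ) + Cd^2 * Sig := by
      calc ∫⁻ y, gF y ∂μ = (∫⁻ y, g y ∂μ) + ∫⁻ y, ∑' i, Gr i y ∂μ :=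
            lintegral_add_right' _ (Measurable.ennreal_tsum hGrmeas).aemeasurable
        _ = (∫⁻ y, g y ∂μ) + ∑' i, ∫⁻ y, Gr i y ∂μ := by
            rw [lintegral_tsum (fun i => (hGrmeas i).aemeasurable)]
        _ ≤ (∫⁻ y, g y ∂μ) + Cd^2 * Sig := by
            refine add_le_add_right ?_ _
            rw [hSig, ← ENNReal.tsum_mul_left]
            exact ENNReal.tsum_le_tsum hint_G
    -- put it together
    have hcap : capa1 μ (G ∪ ⋃ i, ball (c i).1 (c i).2) ≤ eN11 μ F := by
      rw [capa1]
      exact iInf₂_le F hF1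
    have heF : eN11 μ F ≤ (∫⁻ y, ENNReal.ofReal |F y| ∂μ) + ∫⁻ y, gF y ∂μ := by
      rw [eN11]
      exact add_le_add_right (iInf₂_le gF hgFgrad) _
    have hfinal : eN11 μ F < ENNReal.ofReal ε := by
      have h2δ : Cd^2 * Sig + Cd^2 * Sig ≤ ENNReal.ofReal (ε/2) := by
        rw [show Cd^2 * Sig + Cd^2 * Sig = (2 * Cd^2) * Sig by ring]
        calc (2 * Cd^2) * Sig ≤ (2 * Cd^2) * δ := mul_le_mul_right hc3.le _
          _ = (2 * Cd^2) * (ENNReal.ofReal (ε/2) / (2 * Cd^2)) := by rw [hδ]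
          _ ≤ ENNReal.ofReal (ε/2) := ENNReal.mul_div_le
      calc eN11 μ F ≤ (L + Cd^2 * Sig) + ((∫⁻ y, g y ∂μ) + Cd^2 * Sig) :=
            le_trans heF (add_le_add hFL1 hgFint)
        _ = (L + ∫⁻ y, g y ∂μ) + (Cd^2 * Sig + Cd^2 * Sig) := by ring
        _ ≤ (L + ∫⁻ y, g y ∂μ) + ENNReal.ofReal (ε/2) := add_le_add_right h2δ _
        _ < ENNReal.ofReal (ε/2) + ENNReal.ofReal (ε/2) :=
            ENNReal.add_lt_add_right ENNReal.ofReal_ne_top hLg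
        _ = ENNReal.ofReal ε := by
            rw [← ENNReal.ofReal_add (by linarith) (by linarith)]
            norm_num
    refine ⟨G ∪ ⋃ i, ball (c i).1 (c i).2,
      hGopen.union (isOpen_iUnion fun i => isOpen_ball),
      lt_of_le_of_lt hcap hfinal,
      hc1.trans subset_union_right, ?_⟩
    rw [← union_assoc]
    exact hUG.union (isOpen_iUnion fun i => isOpen_ball)
  constructor
  · intro ε hε
    obtain ⟨G', h1, h2, h3, h4⟩ := key ε hε
    refine ⟨G', h1, h2, ?_⟩
    have heq : (U \ A) ∪ G' = U ∪ G' := by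
      apply subset_antisymm
      · exact union_subset_union_left _ diff_subset
      · rintro y (hyU | hyG)
        · by_cases hyA : y ∈ A
          · exact Or.inr (h3 hyA)
          · exact Or.inl ⟨hyU, hyA⟩
        · exact Or.inr hyG
    rwa [heq]
  · intro ε hε
    obtain ⟨G', h1, h2, h3, h4⟩ := key ε hε
    refine ⟨G', h1, h2, ?_⟩
    have heq : (U ∪ A) ∪ G' = U ∪ G' := by
      apply subset_antisymm
      · rintro y ((hyU | hyA) | hyG)
        · exact Or.inl hyU
        · exact Or.inr (h3 hyA)
        · exact Or.inr hyG
      · rintro y (hyU | hyG)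
        · exact Or.inl (Or.inl hyU)
        · exact Or.inr hyG
    rwa [heq]

end
end
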